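/- arXiv:1211.3256 — 2 statements merged into one kernel-verified Lean document; each statement's English description precedes it below -/
import Mathlib

section
/- Let (X,μ) be a standard measure space, 𝓡 an ergodic countable measurable equivalence relation on X, Γ an abelian second countable locally compact group, and c : 𝓡 → Γ a measurable 1-cocycle (i.e. c(x,y)·c(y,z) = c(x,z) whenever x ∼ y ∼ z). Then the asymptotic range r*(c) is a closed subgroup of Γ. -/
/-!
Closedness, `1 ∈ r*(c)` and closure under products are direct from the definition (for products,
compose the two partial maps and use commutativity of `Γ` to reorder the cocycle values). The
substance is closure under inverses. If `γ ∈ r*(c)` and `μ A > 0`, the set of `x ∈ A` that some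
`y ∈ A` reaches with `c(y, x)` near `γ` has positive *outer* measure: otherwise `γ` applied to `A`
minus a null measurable hull of that set would yield such an `x` outside the hull. Selecting such
a `y` measurably on a positive-measure piece then needs capacitability of analytic sets: after
embedding `X` into `ℝ`, a compact piece of the Borel set of pairs still projects to a set of
positive measure, and over it the least point of each fibre is a measurable choice.
-/

open MeasureTheory

/-- The asymptotic range `r*(c)` of a cocycle `c` on an equivalence relation `R`:
`γ ∈ r*(c)` iff for every neighbourhood `U` of `γ` and every measurable set `A` of
positive measure there are a positive-measure measurable `B ⊆ A` and a measurable
`T : B → A` with graph in `R` such that `c(x, Tx) ∈ U` for all `x ∈ B`. -/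
def asymptoticRange {X Γ : Type*} [MeasurableSpace X] [TopologicalSpace Γ] [CommGroup Γ]
    (μ : Measure X) (R : X → X → Prop) (c : X → X → Γ) : Set Γ :=
  {γ | ∀ U ∈ nhds γ, ∀ A : Set X, MeasurableSet A → 0 < μ A →
    ∃ B : Set X, B ⊆ A ∧ MeasurableSet B ∧ 0 < μ B ∧
      ∃ T : X → X, Measurable T ∧ ∀ x ∈ B, T x ∈ A ∧ R x (T x) ∧ c x (T x) ∈ U}

open Set Filter Topology

lemma isCompact_Iic_nat_pi {ι : Type*} (σ : ι → ℕ) : IsCompact (Iic σ) :=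
  Icc_bot (a := σ) ▸ isCompact_Icc

def boundedPrefix (k : ℕ) (τ : ℕ → ℕ) : Set (ℕ → ℕ) := {x | ∀ i < k, x i ≤ τ i}

namespace boundedPrefix

@[simp] lemma zero (τ : ℕ → ℕ) : boundedPrefix 0 τ = univ := by simp [boundedPrefix]

lemma congr {k : ℕ} {τ τ' : ℕ → ℕ} (h : ∀ i < k, τ i = τ' i) :
    boundedPrefix k τ = boundedPrefix k τ' := by
  ext x
  exact forall₂_congr fun i hi => by rw [h i hi]

lemma antitone (τ : ℕ → ℕ) : Antitone fun k => boundedPrefix k τ :=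
  fun _ _ hkl _ hx i hi => hx i (hi.trans_le hkl)

lemma monotone_update (k : ℕ) (τ : ℕ → ℕ) :
    Monotone fun m => boundedPrefix (k + 1) (Function.update τ k m) := by
  intro m m' hm x hx i hi
  rcases eq_or_ne i k with rfl | hik
  · simpa using (by simpa using hx i hi : x i ≤ m).trans hm
  · simpa [hik] using hx i hi

lemma iUnion_update (k : ℕ) (τ : ℕ → ℕ) :
    ⋃ m, boundedPrefix (k + 1) (Function.update τ k m) = boundedPrefix k τ := by
  ext x
  simp only [mem_iUnion, boundedPrefix, mem_ofPred_eq]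
  constructor
  · rintro ⟨m, hm⟩ i hi
    simpa [hi.ne] using hm i (hi.trans k.lt_succ_self)
  · intro hx
    refine ⟨x k, fun i hi => ?_⟩
    rcases Nat.lt_succ_iff_lt_or_eq.mp hi with hi | rfl
    · simpa [hi.ne] using hx i hi
    · simp

end boundedPrefix

/-- Truncating the approximants at `σ` lands them in the compact set `Iic σ` without changing
their first `k` coordinates. -/
lemma mem_image_Iic_of_forall_mem_closure {Z : Type*} [MetricSpace Z] {g : (ℕ → ℕ) → Z}
    (hg : Continuous g) {σ : ℕ → ℕ} {t : Z} (ht : ∀ k, t ∈ closure (g '' boundedPrefix k σ)) :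
    t ∈ g '' Iic σ := by
  have hpick : ∀ k : ℕ, ∃ x ∈ boundedPrefix k σ, dist (g x) t < 1 / ((k : ℝ) + 1) := by
    intro k
    obtain ⟨_, ⟨x, hx, rfl⟩, hxt⟩ := Metric.mem_closure_iff.mp (ht k) _ Nat.one_div_pos_of_nat
    exact ⟨x, hx, by rwa [dist_comm]⟩
  choose x hx hxt using hpick
  obtain ⟨a, ha, φ, hφ, hlim⟩ := (isCompact_Iic_nat_pi σ).tendsto_subseq
    (x := fun k => x k ⊓ σ) fun _ => mem_Iic.mpr inf_le_right
  have hxa : Tendsto (x ∘ φ) atTop (𝓝 a) := by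
    rw [tendsto_pi_nhds] at hlim ⊢
    refine fun i => (hlim i).congr' ?_
    filter_upwards [eventually_gt_atTop i] with k hk
    exact inf_eq_left.mpr (hx (φ k) i (hk.trans_le hφ.le_apply))
  have hgt : Tendsto (g ∘ x ∘ φ) atTop (𝓝 t) := by
    refine tendsto_iff_dist_tendsto_zero.mpr (squeeze_zero (fun _ => dist_nonneg) (fun k => ?_)
      tendsto_one_div_add_atTop_nhds_zero_nat)
    calc dist (g (x (φ k))) t ≤ 1 / ((φ k : ℝ) + 1) := (hxt (φ k)).le
      _ ≤ 1 / ((k : ℝ) + 1) := by gcongr; exact_mod_cast hφ.le_apply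
  exact ⟨a, ha, tendsto_nhds_unique ((hg.tendsto a).comp hxa) hgt⟩

theorem exists_forall_of_exists_update {P : ℕ → (ℕ → ℕ) → Prop}
    (hP : ∀ k τ τ', (∀ i < k, τ i = τ' i) → P k τ → P k τ') {τ₀ : ℕ → ℕ} (h₀ : P 0 τ₀)
    (hstep : ∀ k τ, P k τ → ∃ m, P (k + 1) (Function.update τ k m)) :
    ∃ σ, ∀ k, P k σ := by
  let seq : ∀ k, {τ // P k τ} := fun k => Nat.rec ⟨τ₀, h₀⟩
    (fun k s => ⟨_, (hstep k s.1 s.2).choose_spec⟩) k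
  have hseq : ∀ k i, i < k → (seq k).1 i = (seq (i + 1)).1 i := by
    intro k i hik
    induction k with
    | zero => omega
    | succ k ih =>
      rcases Nat.lt_succ_iff_lt_or_eq.mp hik with hik | rfl
      · exact (Function.update_of_ne hik.ne _ _).trans (ih hik)
      · rfl
  exact ⟨fun i => (seq (i + 1)).1 i, fun k => hP k _ _ (hseq k) (seq k).2⟩

/-- Capacitability: fix the bounds `σ k` one coordinate at a time so that `g '' boundedPrefix k σ`
keeps measure above `ν (range g) / 2`; the closures of these images decrease to a subset of
`g '' Iic σ`. -/
theorem exists_isCompact_measure_image_pos {Z : Type*} [MetricSpace Z] [MeasurableSpace Z]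
    [OpensMeasurableSpace Z] (ν : Measure Z) [IsFiniteMeasure ν] {g : (ℕ → ℕ) → Z}
    (hg : Continuous g) (hpos : 0 < ν (range g)) : ∃ K, IsCompact K ∧ 0 < ν (g '' K) := by
  set δ := ν (range g) / 2
  have hδ : 0 < δ := ENNReal.half_pos hpos.ne'
  obtain ⟨σ, hσ⟩ : ∃ σ, ∀ k, δ < ν (g '' boundedPrefix k σ) := by
    refine exists_forall_of_exists_update (τ₀ := 0) (fun _ _ _ h hk => boundedPrefix.congr h ▸ hk)
      (by simpa using ENNReal.half_lt_self hpos.ne' (measure_ne_top ν _)) fun k τ hk => ?_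
    have hmono : Monotone fun m => g '' boundedPrefix (k + 1) (Function.update τ k m) :=
      fun _ _ hm => image_mono (boundedPrefix.monotone_update k τ hm)
    rwa [← boundedPrefix.iUnion_update, image_iUnion, hmono.measure_iUnion, lt_iSup_iff] at hk
  have hanti : Antitone fun k => closure (g '' boundedPrefix k σ) :=
    fun _ _ hkl => closure_mono (image_mono (boundedPrefix.antitone σ hkl))
  have hinter : δ ≤ ν (⋂ k, closure (g '' boundedPrefix k σ)) := by
    rw [hanti.measure_iInter (fun _ => isClosed_closure.measurableSet.nullMeasurableSet)
      ⟨0, measure_ne_top ν _⟩]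
    exact le_iInf fun k => (hσ k).le.trans (measure_mono subset_closure)
  refine ⟨Iic σ, isCompact_Iic_nat_pi σ, hδ.trans_le (hinter.trans (measure_mono ?_))⟩
  exact fun t ht => mem_image_Iic_of_forall_mem_closure hg (mem_iInter.mp ht)

theorem MeasureTheory.AnalyticSet.exists_isCompact_subset_measure_image_pos {Y Z : Type*}
    [TopologicalSpace Y] [MetricSpace Z] [MeasurableSpace Z] [OpensMeasurableSpace Z]
    (ν : Measure Z) [IsFiniteMeasure ν] {π : Y → Z} (hπ : Continuous π) {S : Set Y}
    (hS : AnalyticSet S) (hpos : 0 < ν (π '' S)) : ∃ K ⊆ S, IsCompact K ∧ 0 < ν (π '' K) := by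
  rcases AnalyticSet_def S ▸ hS with rfl | ⟨f, hf, rfl⟩
  · simp at hpos
  obtain ⟨K, hK, hKpos⟩ := exists_isCompact_measure_image_pos ν (hπ.comp hf)
    (by rwa [range_comp])
  exact ⟨f '' K, image_subset_range f K, hK.image hf, by rwa [image_image]⟩

theorem IsCompact.exists_measurable_section {X : Type*} [TopologicalSpace X] [T2Space X]
    [MeasurableSpace X] [OpensMeasurableSpace X] {K : Set (X × ℝ)} (hK : IsCompact K) :
    ∃ s : X → ℝ, Measurable s ∧ ∀ x ∈ Prod.fst '' K, (x, s x) ∈ K := by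
  have hbdd : ∀ x, BddBelow (Prod.mk x ⁻¹' K) := fun x =>
    (hK.image continuous_snd).bddBelow.mono fun y hy => mem_image_of_mem Prod.snd hy
  have hsec : ∀ x ∈ Prod.fst '' K, (x, sInf (Prod.mk x ⁻¹' K)) ∈ K := by
    rintro x ⟨⟨x, y⟩, hxy, rfl⟩
    exact (hK.isClosed.preimage (Continuous.prodMk_right x)).csInf_mem ⟨y, hxy⟩ (hbdd x)
  refine ⟨fun x => sInf (Prod.mk x ⁻¹' K), measurable_of_Iic fun a => ?_, hsec⟩
  -- off `Prod.fst '' K` the infimum is `sInf ∅ = 0`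
  have hpre : (fun x => sInf (Prod.mk x ⁻¹' K)) ⁻¹' Iic a =
      Prod.fst '' (K ∩ Prod.snd ⁻¹' Iic a) ∪ (Prod.fst '' K)ᶜ ∩ {_x | 0 ≤ a} := by
    ext x
    by_cases hx : x ∈ Prod.fst '' K
    · simp only [mem_preimage, mem_Iic, mem_union, mem_inter_iff, mem_compl_iff, hx,
        not_true_eq_false, false_and, or_false]
      refine ⟨fun h => ⟨_, ⟨hsec x hx, h⟩, rfl⟩, ?_⟩
      rintro ⟨⟨x, y⟩, ⟨hxy, hya⟩, rfl⟩
      exact (csInf_le (hbdd x) hxy).trans hya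
    · have hempty : Prod.mk x ⁻¹' K = ∅ :=
        eq_empty_of_forall_notMem fun y hy => hx ⟨_, hy, rfl⟩
      simp only [mem_preimage, hempty, Real.sInf_empty, mem_Iic, mem_union, mem_inter_iff,
        mem_compl_iff, hx, not_false_eq_true, true_and, mem_ofPred_eq]
      exact ⟨Or.inr, fun h => h.resolve_left fun ⟨p, hp, hpx⟩ => hx ⟨p, hp.1, hpx⟩⟩
  rw [hpre]
  exact ((hK.inter_right (isClosed_Iic.preimage continuous_snd)).image
    continuous_fst).isClosed.measurableSet.union
    ((hK.image continuous_fst).isClosed.measurableSet.compl.inter (MeasurableSet.const _))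

theorem MeasurableSet.exists_measurable_section_of_isFiniteMeasure {X Y : Type*}
    [MeasurableSpace X] [StandardBorelSpace X] [MeasurableSpace Y] [StandardBorelSpace Y]
    (μ : Measure X) [IsFiniteMeasure μ] {S : Set (X × Y)} (hS : MeasurableSet S)
    (hpos : 0 < μ (Prod.fst '' S)) :
    ∃ B ⊆ Prod.fst '' S, MeasurableSet B ∧ 0 < μ B ∧
      ∃ T : X → Y, Measurable T ∧ ∀ x ∈ B, (x, T x) ∈ S := by
  obtain ⟨eX, heX⟩ := exists_measurableEmbedding_real X
  obtain ⟨eY, heY⟩ := exists_measurableEmbedding_real Y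
  have hF : MeasurableEmbedding (Prod.map eX eY) := heX.prodMap heY
  have hfst : Prod.fst '' (Prod.map eX eY '' S) = eX '' (Prod.fst '' S) := by
    simp only [image_image, Prod.map_fst]
  have hνpos : 0 < μ.map eX (Prod.fst '' (Prod.map eX eY '' S)) := by
    rwa [hfst, heX.map_apply, preimage_image_eq _ heX.injective]
  obtain ⟨K, hKS, hK, hKpos⟩ := (hF.measurableSet_image' hS).analyticSet
    |>.exists_isCompact_subset_measure_image_pos (μ.map eX) continuous_fst hνpos
  obtain ⟨s, hs, hsK⟩ := hK.exists_measurable_section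
  have : Nonempty Y := by
    obtain ⟨_, p, -, -⟩ := nonempty_of_measure_ne_zero hpos.ne'
    exact ⟨p.2⟩
  obtain ⟨r, hr, hre⟩ := heY.exists_measurable_extend measurable_id fun _ => inferInstance
  have hKm : MeasurableSet (Prod.fst '' K) :=
    (hK.image continuous_fst).isClosed.measurableSet
  have hsection : ∀ x ∈ eX ⁻¹' (Prod.fst '' K), (x, r (s (eX x))) ∈ S := by
    intro x hx
    obtain ⟨⟨x', y⟩, hp, hpx⟩ := hKS (hsK _ hx)
    obtain ⟨hx', hy⟩ := Prod.mk.inj hpx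
    rwa [← hy, ← heX.injective hx', ← Function.comp_apply (f := r), hre, id]
  refine ⟨eX ⁻¹' (Prod.fst '' K), fun x hx => ⟨_, hsection x hx, rfl⟩, heX.measurable hKm,
    ?_, r ∘ s ∘ eX, hr.comp (hs.comp heX.measurable), hsection⟩
  rwa [← heX.map_apply]

theorem MeasurableSet.exists_measurable_section {X Y : Type*}
    [MeasurableSpace X] [StandardBorelSpace X] [MeasurableSpace Y] [StandardBorelSpace Y]
    (μ : Measure X) [SigmaFinite μ] {S : Set (X × Y)} (hS : MeasurableSet S)
    (hpos : 0 < μ (Prod.fst '' S)) :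
    ∃ B ⊆ Prod.fst '' S, MeasurableSet B ∧ 0 < μ B ∧
      ∃ T : X → Y, Measurable T ∧ ∀ x ∈ B, (x, T x) ∈ S := by
  obtain ⟨n, hn⟩ : ∃ n, 0 < μ (Prod.fst '' S ∩ spanningSets μ n) := by
    refine exists_measure_pos_of_not_measure_iUnion_null ?_
    rw [← inter_iUnion, iUnion_spanningSets, inter_univ]
    exact hpos.ne'
  have : IsFiniteMeasure (μ.restrict (spanningSets μ n)) :=
    isFiniteMeasure_restrict.mpr (measure_spanningSets_lt_top μ n).ne
  rw [← Measure.restrict_apply' (measurableSet_spanningSets μ n)] at hn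
  obtain ⟨B, hBS, hB, hBpos, hT⟩ := hS.exists_measurable_section_of_isFiniteMeasure _ hn
  exact ⟨B, hBS, hB, hBpos.trans_le (Measure.restrict_le_self B), hT⟩

def IsCocycle {X Γ : Type*} [Group Γ] (R : X → X → Prop) (c : X → X → Γ) : Prop :=
  ∀ x y z, R x y → R y z → c x y * c y z = c x z

namespace IsCocycle

variable {X Γ : Type*} [Group Γ] {R : X → X → Prop} {c : X → X → Γ}

lemma apply_self (hc : IsCocycle R c) {x : X} (hx : R x x) : c x x = 1 :=
  mul_eq_left.mp (hc x x x hx hx)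

lemma apply_symm (hc : IsCocycle R c) (hR : Equivalence R) {x y : X} (hxy : R x y) :
    c y x = (c x y)⁻¹ :=
  eq_inv_of_mul_eq_one_right <| (hc x y x hxy (hR.symm hxy)).trans (hc.apply_self (hR.refl x))

end IsCocycle

def reverseSteps {X Γ : Type*} (R : X → X → Prop) (c : X → X → Γ) (A : Set X) (U : Set Γ) :
    Set (X × X) :=
  {p | p.1 ∈ A ∧ p.2 ∈ A ∧ R p.2 p.1 ∧ c p.2 p.1 ∈ U}

lemma measurableSet_reverseSteps {X Γ : Type*} [MeasurableSpace X] [MeasurableSpace Γ]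
    {R : X → X → Prop} {c : X → X → Γ} (hRm : MeasurableSet {p : X × X | R p.1 p.2})
    (hcm : Measurable fun p : X × X => c p.1 p.2) {A : Set X} (hA : MeasurableSet A) {U : Set Γ}
    (hU : MeasurableSet U) : MeasurableSet (reverseSteps R c A U) :=
  (measurable_fst hA).inter <| (measurable_snd hA).inter <|
    (measurable_swap hRm).inter (hcm.comp measurable_swap hU)

open scoped Pointwise

section asymptoticRange

variable {X Γ : Type*} [MeasurableSpace X] [CommGroup Γ] [TopologicalSpace Γ] {μ : Measure X}
  {R : X → X → Prop} {c : X → X → Γ}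

lemma isClosed_asymptoticRange : IsClosed (asymptoticRange μ R c) := by
  refine isClosed_of_closure_subset fun γ hγ U hU A hA hμA => ?_
  obtain ⟨γ', hγ'U, hγ'⟩ :=
    mem_closure_iff.mp hγ _ isOpen_interior (mem_interior_iff_mem_nhds.mpr hU)
  obtain ⟨B, hBA, hB, hμB, T, hT, hTB⟩ :=
    hγ' _ (isOpen_interior.mem_nhds hγ'U) A hA hμA
  exact ⟨B, hBA, hB, hμB, T, hT, fun x hx =>
    ⟨(hTB x hx).1, (hTB x hx).2.1, interior_subset (hTB x hx).2.2⟩⟩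

lemma one_mem_asymptoticRange (hR : Equivalence R) (hc : IsCocycle R c) :
    (1 : Γ) ∈ asymptoticRange μ R c := fun _ hU A hA hμA =>
  ⟨A, subset_rfl, hA, hμA, id, measurable_id, fun x hx =>
    ⟨hx, hR.refl x, hc.apply_self (hR.refl x) ▸ mem_of_mem_nhds hU⟩⟩

lemma mul_mem_asymptoticRange [ContinuousMul Γ] (hR : Equivalence R) (hc : IsCocycle R c)
    {γ₁ γ₂ : Γ} (h₁ : γ₁ ∈ asymptoticRange μ R c) (h₂ : γ₂ ∈ asymptoticRange μ R c) :
    γ₁ * γ₂ ∈ asymptoticRange μ R c := by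
  intro U hU A hA hμA
  obtain ⟨V₁, hV₁, V₂, hV₂, hV⟩ := mem_nhds_prod_iff.mp (continuous_mul.tendsto (γ₁, γ₂) hU)
  obtain ⟨B₁, hB₁A, hB₁, hμB₁, T₁, hT₁, hT₁B⟩ := h₁ V₁ hV₁ A hA hμA
  obtain ⟨B₂, hB₂B₁, hB₂, hμB₂, T₂, hT₂, hT₂B⟩ := h₂ V₂ hV₂ B₁ hB₁ hμB₁
  refine ⟨B₂, hB₂B₁.trans hB₁A, hB₂, hμB₂, T₁ ∘ T₂, hT₁.comp hT₂, fun x hx => ?_⟩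
  obtain ⟨hx₁, hxR, hxV⟩ := hT₂B x hx
  obtain ⟨hx₂, hx₁R, hx₁V⟩ := hT₁B _ hx₁
  refine ⟨hx₂, hR.trans hxR hx₁R, ?_⟩
  rw [Function.comp_apply, ← hc _ _ _ hxR hx₁R, mul_comm]
  exact hV (mk_mem_prod hx₁V hxV)

/-- If this projection were null, `γ` applied to `A` minus a null measurable hull of it would
produce a point of the projection outside the hull. -/
lemma measure_fst_image_pos_of_mem_asymptoticRange {γ : Γ} (hγ : γ ∈ asymptoticRange μ R c)
    {U : Set Γ} (hU : U ∈ 𝓝 γ) {A : Set X} (hA : MeasurableSet A) (hμA : 0 < μ A) :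
    0 < μ (Prod.fst '' reverseSteps R c A U) := by
  set W := toMeasurable μ (Prod.fst '' reverseSteps R c A U)
  refine pos_iff_ne_zero.mpr fun h => ?_
  have hμW : μ W = 0 := by rw [measure_toMeasurable, h]
  have hμAW : 0 < μ (A \ W) := by rwa [measure_sdiff_null hμW]
  obtain ⟨B, hBA, -, hμB, T, -, hTB⟩ :=
    hγ U hU _ (hA.diff (measurableSet_toMeasurable _ _)) hμAW
  obtain ⟨z, hz⟩ := nonempty_of_measure_ne_zero hμB.ne'
  obtain ⟨hTz, hzR, hzU⟩ := hTB z hz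
  exact hTz.2 <| subset_toMeasurable _ _ ⟨(T z, z), ⟨hTz.1, (hBA hz).1, hzR, hzU⟩, rfl⟩

lemma inv_mem_asymptoticRange [StandardBorelSpace X] [SigmaFinite μ] [ContinuousInv Γ]
    [MeasurableSpace Γ] [OpensMeasurableSpace Γ] (hR : Equivalence R)
    (hRm : MeasurableSet {p : X × X | R p.1 p.2}) (hcm : Measurable fun p : X × X => c p.1 p.2)
    (hc : IsCocycle R c) {γ : Γ} (hγ : γ ∈ asymptoticRange μ R c) :
    γ⁻¹ ∈ asymptoticRange μ R c := by
  intro U hU A hA hμA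
  have hV : IsOpen (interior U)⁻¹ := isOpen_interior.inv
  have hS := measurableSet_reverseSteps hRm hcm hA hV.measurableSet
  have hpos := measure_fst_image_pos_of_mem_asymptoticRange hγ
    (hV.mem_nhds (by simpa using mem_interior_iff_mem_nhds.mpr hU)) hA hμA
  obtain ⟨B, hBS, hB, hμB, T, hT, hTB⟩ := hS.exists_measurable_section μ hpos
  refine ⟨B, fun x hx => ?_, hB, hμB, T, hT, fun x hx => ?_⟩
  · obtain ⟨_, ⟨hxA, -⟩, rfl⟩ := hBS hx
    exact hxA
  obtain ⟨-, hTx, hR', hcU⟩ := hTB x hx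
  refine ⟨hTx, hR.symm hR', interior_subset ?_⟩
  exact hc.apply_symm hR hR' ▸ mem_inv.mp hcU

end asymptoticRange

theorem asymptoticRange_isClosed_subgroup_general
    {X Γ : Type*} [MeasurableSpace X] [StandardBorelSpace X]
    (μ : Measure X) [SigmaFinite μ]
    [CommGroup Γ] [TopologicalSpace Γ] [IsTopologicalGroup Γ]
    [MeasurableSpace Γ] [BorelSpace Γ]
    (R : X → X → Prop) (hequiv : Equivalence R)
    (hmeas : MeasurableSet {p : X × X | R p.1 p.2})
    (c : X → X → Γ) (hcmeas : Measurable fun p : X × X => c p.1 p.2)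
    (hcocycle : ∀ x y z, R x y → R y z → c x y * c y z = c x z) :
    ∃ H : Subgroup Γ, IsClosed (H : Set Γ) ∧ (H : Set Γ) = asymptoticRange μ R c := by
  exact ⟨{ carrier := asymptoticRange μ R c
           one_mem' := one_mem_asymptoticRange hequiv hcocycle
           mul_mem' := mul_mem_asymptoticRange hequiv hcocycle
           inv_mem' := inv_mem_asymptoticRange hequiv hmeas hcmeas hcocycle },
    isClosed_asymptoticRange, rfl⟩

/-- for a measurable cocycle `c` on an ergodic countable measurable
equivalence relation `R` on a standard measure space, with values in an abelian
second countable locally compact group `Γ`, the asymptotic range `r*(c)` is a closed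
subgroup of `Γ`. -/
theorem asymptoticRange_isClosed_subgroup
    {X Γ : Type*} [MeasurableSpace X] [StandardBorelSpace X]
    (μ : Measure X) [SigmaFinite μ]
    [CommGroup Γ] [TopologicalSpace Γ] [IsTopologicalGroup Γ]
    [SecondCountableTopology Γ] [LocallyCompactSpace Γ] [MeasurableSpace Γ] [BorelSpace Γ]
    (R : X → X → Prop) (hequiv : Equivalence R)
    (hcount : ∀ x, {y | R x y}.Countable)
    (hmeas : MeasurableSet {p : X × X | R p.1 p.2})
    (herg : ∀ S : Set X, MeasurableSet S → (∀ x y, R x y → (x ∈ S ↔ y ∈ S)) →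
      μ S = 0 ∨ μ Sᶜ = 0)
    (c : X → X → Γ) (hcmeas : Measurable fun p : X × X => c p.1 p.2)
    (hcocycle : ∀ x y z, R x y → R y z → c x y * c y z = c x z) :
    ∃ H : Subgroup Γ, IsClosed (H : Set Γ) ∧ (H : Set Γ) = asymptoticRange μ R c :=
  asymptoticRange_isClosed_subgroup_general μ R hequiv hmeas c hcmeas hcocycle
end

section
/- Let {(X_n, μ_n)}_{n≥1} be a sequence of at most countable probability spaces, (X,μ) their product, and 𝓡 the tail equivalence relation on X (x ∼ y iff x_n = y_n for all but finitely many n). A Γ-valued 1-cocycle c on 𝓡 is of product type if and only if c is constant on each set {(x,y) ∈ 𝓡 : x_n = a, y_n = b, x_m = y_m for all m ≠ n}, for every n ∈ ℕ and a,b ∈ X_n. -/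
/-!
Fix a base point `e` and set `θₙ(a) = c(e, e[n ↦ a])`. If `c` is constant on the
elementary sets, then for `u, v` that differ only at `n` the cocycle identity through
`e[n ↦ uₙ]` and `e` gives `c(u, v) = θₙ(vₙ)·θₙ(uₙ)⁻¹`. So `c` and the product-type cocycle of `θ`
agree on pairs differing in one coordinate, and two cocycles that agree there agree on all
of the tail relation, since a tail-equivalent pair is joined by finitely many such moves.
-/

open Function

section TailCocycle

variable {ι : Type*} {X : ι → Type*} {Γ : Type*} [CommGroup Γ]

def TailEquiv (x y : ∀ i, X i) : Prop :=
  {i | x i ≠ y i}.Finite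

namespace TailEquiv

theorem refl (x : ∀ i, X i) : TailEquiv x x := by
  simp [TailEquiv]

theorem symm {x y : ∀ i, X i} (h : TailEquiv x y) : TailEquiv y x :=
  h.subset fun _ hi => Ne.symm hi

end TailEquiv

def AgreeOff (n : ι) (u v : ∀ i, X i) : Prop :=
  ∀ m, m ≠ n → u m = v m

theorem AgreeOff.tailEquiv {n : ι} {u v : ∀ i, X i} (h : AgreeOff n u v) : TailEquiv u v :=
  (Set.finite_singleton n).subset fun m hm => by_contra fun hmn => hm (h m hmn)

def IsTailCocycle (c : (∀ i, X i) → (∀ i, X i) → Γ) : Prop :=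
  ∀ x y z, TailEquiv x y → TailEquiv y z → c x y * c y z = c x z

noncomputable def prodCocycle (θ : ∀ i, X i → Γ) (x y : ∀ i, X i) : Γ :=
  ∏ᶠ i, θ i (y i) * (θ i (x i))⁻¹

def IsProductType (c : (∀ i, X i) → (∀ i, X i) → Γ) : Prop :=
  ∃ θ : ∀ i, X i → Γ, ∀ x y, TailEquiv x y → c x y = prodCocycle θ x y

def IsConstOnElementarySets (c : (∀ i, X i) → (∀ i, X i) → Γ) : Prop :=
  ∀ (n : ι) (a b : X n), ∀ x y x' y' : ∀ i, X i,
    (x n = a ∧ y n = b ∧ AgreeOff n x y) → (x' n = a ∧ y' n = b ∧ AgreeOff n x' y') →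
      c x y = c x' y'

theorem prodCocycle_of_agreeOff (θ : ∀ i, X i → Γ) {n : ι} {u v : ∀ i, X i}
    (h : AgreeOff n u v) : prodCocycle θ u v = θ n (v n) * (θ n (u n))⁻¹ :=
  finprod_eq_single _ n fun m hm => by rw [h m hm, mul_inv_cancel]

theorem finite_mulSupport_prodCocycle (θ : ∀ i, X i → Γ) {x y : ∀ i, X i}
    (h : TailEquiv x y) : (mulSupport fun i => θ i (y i) * (θ i (x i))⁻¹).Finite :=
  h.subset fun i hi hxy => hi (by simp only [hxy, mul_inv_cancel])

theorem isTailCocycle_prodCocycle (θ : ∀ i, X i → Γ) : IsTailCocycle (prodCocycle θ) := by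
  intro x y z hxy hyz
  rw [prodCocycle, prodCocycle, prodCocycle, ← finprod_mul_distrib
    (finite_mulSupport_prodCocycle θ hxy) (finite_mulSupport_prodCocycle θ hyz)]
  exact finprod_congr fun i => by rw [mul_comm, mul_assoc, inv_mul_cancel_left]

theorem IsProductType.isConstOnElementarySets {c : (∀ i, X i) → (∀ i, X i) → Γ}
    (hc : IsProductType c) : IsConstOnElementarySets c := by
  obtain ⟨θ, hθ⟩ := hc
  rintro n a b x y x' y' ⟨rfl, rfl, hxy⟩ ⟨hx', hy', hx'y'⟩
  rw [hθ x y hxy.tailEquiv, hθ x' y' hx'y'.tailEquiv, prodCocycle_of_agreeOff θ hxy,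
    prodCocycle_of_agreeOff θ hx'y', hx', hy']

namespace IsTailCocycle

variable {c c' : (∀ i, X i) → (∀ i, X i) → Γ}

theorem apply_self (hc : IsTailCocycle c) (x : ∀ i, X i) : c x x = 1 :=
  mul_eq_left.1 (hc x x x (.refl x) (.refl x))

theorem apply_symm (hc : IsTailCocycle c) {x y : ∀ i, X i} (h : TailEquiv x y) :
    c y x = (c x y)⁻¹ :=
  eq_inv_of_mul_eq_one_right ((hc x y x h h.symm).trans (hc.apply_self x))

theorem apply_eq_of_forall_agreeOff (hc : IsTailCocycle c) (hc' : IsTailCocycle c')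
    (h : ∀ n u v, AgreeOff n u v → c u v = c' u v) {x y : ∀ i, X i}
    (hxy : TailEquiv x y) : c x y = c' x y := by
  classical
  suffices ∀ s : Finset ι, ∀ x, {i | x i ≠ y i} ⊆ s → c x y = c' x y from
    this _ x hxy.coe_toFinset.ge
  intro s
  induction s using Finset.induction_on with
  | empty =>
    intro x hx
    obtain rfl : x = y := funext fun i => by_contra fun hi => Finset.notMem_empty i (hx hi)
    rw [hc.apply_self, hc'.apply_self]
  | insert n s _ ih =>
    intro x hx
    set z := update x n (y n)
    have hxz : AgreeOff n x z := fun m hm => (update_of_ne hm _ _).symm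
    have hzy : {i | z i ≠ y i} ⊆ s := fun i hi => by
      have hin : i ≠ n := by rintro rfl; exact hi (update_self _ _ _)
      simpa [hin] using hx (show x i ≠ y i by rwa [hxz i hin])
    have hzy' : TailEquiv z y := (Finset.finite_toSet s).subset hzy
    rw [← hc x z y hxz.tailEquiv hzy', ← hc' x z y hxz.tailEquiv hzy', h n x z hxz,
      ih z hzy]

theorem apply_of_agreeOff [DecidableEq ι] (hc : IsTailCocycle c)
    (hconst : IsConstOnElementarySets c) (e : ∀ i, X i) {n : ι} {u v : ∀ i, X i}
    (huv : AgreeOff n u v) :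
    c u v = c e (update e n (v n)) * (c e (update e n (u n)))⁻¹ := by
  have hupd : ∀ a, AgreeOff n e (update e n a) := fun a m hm => (update_of_ne hm _ _).symm
  have hue := (hupd (u n)).tailEquiv
  rw [hconst n (u n) (v n) u v (update e n (u n)) (update e n (v n)) ⟨rfl, rfl, huv⟩
      ⟨update_self _ _ _, update_self _ _ _, fun m hm => by simp only [update_of_ne hm]⟩,
    ← hc _ e _ hue.symm (hupd (v n)).tailEquiv, hc.apply_symm hue, mul_comm]

theorem isProductType (hc : IsTailCocycle c) (hconst : IsConstOnElementarySets c) :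
    IsProductType c := by
  classical
  rcases isEmpty_or_nonempty (∀ i, X i) with hX | ⟨⟨e⟩⟩
  · exact ⟨1, fun x => isEmptyElim x⟩
  refine ⟨fun n a => c e (update e n a), fun x y hxy => ?_⟩
  refine hc.apply_eq_of_forall_agreeOff (isTailCocycle_prodCocycle _) (fun n u v huv => ?_) hxy
  rw [hc.apply_of_agreeOff hconst e huv, prodCocycle_of_agreeOff _ huv]

theorem isProductType_iff (hc : IsTailCocycle c) :
    IsProductType c ↔ IsConstOnElementarySets c :=
  ⟨IsProductType.isConstOnElementarySets, hc.isProductType⟩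

end IsTailCocycle

end TailCocycle

theorem productType_iff_constant_on_elementary_sets_general
    {X : ℕ → Type*}
    {Γ : Type*} [CommGroup Γ]
    (R : (∀ n, X n) → (∀ n, X n) → Prop)
    (hR : ∀ x y, R x y ↔ {n | x n ≠ y n}.Finite)
    (c : (∀ n, X n) → (∀ n, X n) → Γ)
    (hcocycle : ∀ x y z, R x y → R y z → c x y * c y z = c x z) :
    (∃ θ : ∀ n, X n → Γ, ∀ x y, R x y →
        c x y = ∏ᶠ n, θ n (y n) * (θ n (x n))⁻¹)
      ↔ (∀ (n : ℕ) (a b : X n), ∀ x y x' y' : ∀ m, X m,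
          (x n = a ∧ y n = b ∧ ∀ m, m ≠ n → x m = y m) →
          (x' n = a ∧ y' n = b ∧ ∀ m, m ≠ n → x' m = y' m) →
          c x y = c x' y') := by
  obtain rfl : R = TailEquiv := funext₂ fun x y => propext (hR x y)
  exact IsTailCocycle.isProductType_iff hcocycle

/-- on the tail equivalence relation of a countable product, a `Γ`-valued
`1`-cocycle `c` is of product type (i.e. `c(x,y) = ∏ₙ θₙ(yₙ)·θₙ(xₙ)⁻¹` for some maps
`θₙ : Xₙ → Γ`) if and only if `c` is constant on each of the sets
`{(x,y) ∈ 𝓡 : xₙ = a, yₙ = b, xₘ = yₘ for m ≠ n}`. -/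
theorem productType_iff_constant_on_elementary_sets
    {X : ℕ → Type*} [∀ n, Countable (X n)] [∀ n, Nonempty (X n)]
    {Γ : Type*} [CommGroup Γ]
    (R : (∀ n, X n) → (∀ n, X n) → Prop)
    (hR : ∀ x y, R x y ↔ {n | x n ≠ y n}.Finite)
    (c : (∀ n, X n) → (∀ n, X n) → Γ)
    (hcocycle : ∀ x y z, R x y → R y z → c x y * c y z = c x z) :
    (∃ θ : ∀ n, X n → Γ, ∀ x y, R x y →
        c x y = ∏ᶠ n, θ n (y n) * (θ n (x n))⁻¹)
      ↔ (∀ (n : ℕ) (a b : X n), ∀ x y x' y' : ∀ m, X m,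
          (x n = a ∧ y n = b ∧ ∀ m, m ≠ n → x m = y m) →
          (x' n = a ∧ y' n = b ∧ ∀ m, m ≠ n → x' m = y' m) →
          c x y = c x' y') :=
  productType_iff_constant_on_elementary_sets_general R hR c hcocycle
end
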